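/- arXiv:1708.03515 — 3 statements merged into one kernel-verified Lean document; each statement's English description precedes it below -/
import Mathlib

section
/- Let r ≥ 1 and d ≥ 2r be real numbers with d ≥ 1, and let λ = (log₂(4d/r))/d. If λ ≤ 1, then 2^(-λ) + 2^(-λ·d)/r ≤ 1. -/
/-! With `L = log₂ (4d/r)` we have `λ d = L`, so the second term is exactly `1/(4d)`. Bernoulli's
inequality for exponents in `[0, 1]` gives `2^(-λ) ≤ 1 - λ/2`, and `d ≥ 2r` forces `L ≥ 1`, hence
`λ/2 = L/(2d) ≥ 1/(4d)`. -/

open Real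

lemma Real.rpow_neg_le_one_sub_mul {b x : ℝ} (hb : 0 < b) (hx0 : 0 ≤ x) (hx1 : x ≤ 1) :
    b ^ (-x) ≤ 1 - x * (1 - b⁻¹) := by
  rw [rpow_neg hb.le, ← inv_rpow hb.le]
  calc b⁻¹ ^ x = (1 + (b⁻¹ - 1)) ^ x := by rw [add_sub_cancel]
    _ ≤ 1 + x * (b⁻¹ - 1) :=
      rpow_one_add_le_one_add_mul_self (by linarith [inv_pos.2 hb]) hx0 hx1
    _ = 1 - x * (1 - b⁻¹) := by ring

lemma Real.rpow_neg_logb {b y : ℝ} (hb : 0 < b) (hb1 : b ≠ 1) (hy : 0 < y) :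
    b ^ (-logb b y) = y⁻¹ := by
  rw [rpow_neg hb.le, rpow_logb hb hb1 hy]

theorem recurrence_key_step_general (r d : ℝ) (hr : 1 ≤ r) (hd : 2 * r ≤ d)
    (lam : ℝ) (hlam : lam = Real.logb 2 (4 * d / r) / d) (hlam1 : lam ≤ 1) :
    (2 : ℝ) ^ (-lam) + (2 : ℝ) ^ (-(lam * d)) / r ≤ 1 := by
  have hr0 : 0 < r := by linarith
  have hd0 : 0 < d := by linarith
  have hratio : 2 ≤ 4 * d / r := by rw [le_div_iff₀ hr0]; linarith
  have hL : 1 ≤ logb 2 (4 * d / r) := by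
    rw [le_logb_iff_rpow_le one_lt_two (by linarith), rpow_one]
    exact hratio
  have hlam_mul : lam * d = logb 2 (4 * d / r) := by
    rw [hlam]; field_simp
  have hsecond : (2 : ℝ) ^ (-(lam * d)) / r = 1 / (4 * d) := by
    rw [hlam_mul, rpow_neg_logb two_pos (by norm_num) (by linarith)]
    field_simp
  have hlam0 : 0 ≤ lam := by rw [hlam]; positivity
  have hfirst : (2 : ℝ) ^ (-lam) ≤ 1 - lam / 2 := by
    calc (2 : ℝ) ^ (-lam) ≤ 1 - lam * (1 - 2⁻¹) := rpow_neg_le_one_sub_mul two_pos hlam0 hlam1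
      _ = 1 - lam / 2 := by ring
  have hlam_half : 1 / (4 * d) ≤ lam / 2 := by
    rw [div_le_div_iff₀ (by positivity) two_pos]
    linarith
  linarith

theorem recurrence_key_step (r d : ℝ) (hr : 1 ≤ r) (hd1 : 1 ≤ d) (hd : 2 * r ≤ d)
    (lam : ℝ) (hlam : lam = Real.logb 2 (4 * d / r) / d) (hlam1 : lam ≤ 1) :
    (2 : ℝ) ^ (-lam) + (2 : ℝ) ^ (-(lam * d)) / r ≤ 1 :=
  recurrence_key_step_general r d hr hd lam hlam hlam1
end

section
/- Let d ≥ 2 be a natural number, r ≥ 1 a real, λ = (log₂(4d/r))/d with λ ≤ 1, and suppose d ≥ 2r. Let R : ℕ → ℝ≥0 satisfy R(n) ≤ 1 for all n < d, and R(n) ≤ R(n-1) + R(n-d)/r for all n ≥ d. Then R(n) ≤ 2^(λ·n) for all n. -/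
/-!
Put `μ = 2 ^ λ`. The bound `R n ≤ μ ^ n` propagates through the recurrence as soon as
`μ⁻¹ + μ⁻ᵈ / r ≤ 1`. The choice of `λ` makes `r * μ ^ d = 4 * d`, so this reduces to
`μ⁻¹ ≤ 1 - 1 / (4 * d)`, which follows from `μ ≥ 1 + log μ` and `d * log μ = log (4 * d / r) ≥ log 2`.
-/

theorem le_pow_of_branching_recurrence {d : ℕ} (hd : 1 ≤ d) {r μ : ℝ} (hr : 0 ≤ r) (hμ : 1 ≤ μ)
    (hchar : μ⁻¹ + (μ ^ d)⁻¹ / r ≤ 1) {R : ℕ → ℝ} (hbase : ∀ n < d, R n ≤ 1)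
    (hrec : ∀ n, d ≤ n → R n ≤ R (n - 1) + R (n - d) / r) (n : ℕ) : R n ≤ μ ^ n := by
  have hμ0 : μ ≠ 0 := by positivity
  induction n using Nat.strong_induction_on with
  | _ n ih =>
    rcases lt_or_ge n d with hn | hn
    · exact (hbase n hn).trans (one_le_pow₀ hμ)
    · calc R n ≤ R (n - 1) + R (n - d) / r := hrec n hn
        _ ≤ μ ^ (n - 1) + μ ^ (n - d) / r := by
          gcongr
          · exact ih _ (by omega)
          · exact ih _ (by omega)
        _ = μ ^ n * (μ⁻¹ + (μ ^ d)⁻¹ / r) := by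
          rw [pow_sub₀ _ hμ0 (by omega), pow_sub₀ _ hμ0 hn, pow_one]
          ring
        _ ≤ μ ^ n := mul_le_of_le_one_right (by positivity) hchar

theorem inv_add_inv_four_mul_le_one_of_two_le_pow {d : ℕ} (hd : 1 ≤ d) {μ : ℝ} (hμ : 0 < μ)
    (h : 2 ≤ μ ^ d) : μ⁻¹ + (4 * d : ℝ)⁻¹ ≤ 1 := by
  have hd' : (1 : ℝ) ≤ d := by exact_mod_cast hd
  have hlog : Real.log 2 ≤ d * Real.log μ := by
    rw [← Real.log_pow]
    exact Real.log_le_log two_pos h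
  have hlog_μ : 1 / (4 * d - 1) ≤ Real.log μ := by
    rw [div_le_iff₀ (by linarith)]
    nlinarith [Real.log_two_gt_d9]
  have hexp : Real.log μ + 1 ≤ μ := by
    simpa [Real.exp_log hμ] using Real.add_one_le_exp (Real.log μ)
  have h4d : (0 : ℝ) < 4 * d := by positivity
  -- `μ ≥ 1 + 1 / (4 * d - 1) = 4 * d / (4 * d - 1)`
  rw [← le_sub_iff_add_le, inv_le_iff_one_le_mul₀ hμ, ← one_div, one_sub_div h4d.ne',
    div_mul_eq_mul_div, le_div_iff₀ h4d]
  rw [div_le_iff₀ (by linarith)] at hlog_μ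
  nlinarith

theorem branching_recurrence_bound_general (d : ℕ) (r : ℝ) (hr : 1 ≤ r)
    (lam : ℝ) (hlam : lam = Real.logb 2 (4 * d / r) / d)
    (hdr : 2 * r ≤ (d : ℝ))
    (R : ℕ → NNReal)
    (hbase : ∀ n, n < d → R n ≤ 1)
    (hrec : ∀ n, d ≤ n → (R n : ℝ) ≤ (R (n - 1) : ℝ) + (R (n - d) : ℝ) / r) :
    ∀ n, (R n : ℝ) ≤ (2 : ℝ) ^ (lam * n) := by
  have hr0 : 0 < r := by linarith
  have hd : 1 ≤ d := by exact_mod_cast (by linarith : (1 : ℝ) ≤ d)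
  have hμd : (2 ^ lam) ^ d = 4 * d / r := by
    rw [← Real.rpow_mul_natCast zero_le_two, hlam, div_mul_cancel₀ _ (by positivity)]
    exact Real.rpow_logb two_pos (by norm_num) (by positivity)
  have hμ : 1 ≤ (2 : ℝ) ^ lam := by
    have h1 : 1 ≤ 4 * (d : ℝ) / r := (le_div_iff₀ hr0).2 (by linarith)
    exact Real.one_le_rpow one_le_two
      (hlam ▸ div_nonneg (Real.logb_nonneg one_lt_two h1) (by positivity))
  have hchar : ((2 : ℝ) ^ lam)⁻¹ + (((2 : ℝ) ^ lam) ^ d)⁻¹ / r ≤ 1 := by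
    have h2 : 2 ≤ ((2 : ℝ) ^ lam) ^ d := hμd ▸ (le_div_iff₀ hr0).2 (by linarith)
    have := inv_add_inv_four_mul_le_one_of_two_le_pow hd (by positivity) h2
    rwa [hμd, inv_div, div_div, div_mul_cancel_right₀ hr0.ne']
  intro n
  rw [Real.rpow_mul_natCast zero_le_two]
  exact le_pow_of_branching_recurrence hd hr0.le hμ hchar (by exact_mod_cast hbase) hrec n

theorem branching_recurrence_bound (d : ℕ) (hd : 2 ≤ d) (r : ℝ) (hr : 1 ≤ r)
    (lam : ℝ) (hlam : lam = Real.logb 2 (4 * d / r) / d) (hlam1 : lam ≤ 1)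
    (hdr : 2 * r ≤ (d : ℝ))
    (R : ℕ → NNReal)
    (hbase : ∀ n, n < d → R n ≤ 1)
    (hrec : ∀ n, d ≤ n → (R n : ℝ) ≤ (R (n - 1) : ℝ) + (R (n - d) : ℝ) / r) :
    ∀ n, (R n : ℝ) ≤ (2 : ℝ) ^ (lam * n) :=
  branching_recurrence_bound_general d r hr lam hlam hdr R hbase hrec
end

section
/- Let Φ be a finite set of predicates P₁,…,P_m over a finite variable set X with assignments into {0,1}, and let G be the FGLSS graph: vertices are pairs (i,γ) where γ is a partial assignment to the variables of P_i satisfying P_i, and two vertices (i,γ), (i',γ') are adjacent iff γ and γ' assign different values to some common variable. Then the maximum independent set size α(G) equals the maximum over assignments σ : X → {0,1} of the number of predicates satisfied by σ. -/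
/-! An independent set of the FGLSS graph takes at most one vertex per predicate (two vertices of the
same predicate are consistent only if equal), and its partial assignments are pairwise consistent, so
they glue to one global assignment satisfying all of those predicates. Conversely, the restrictions of
an assignment `σ` to the predicates it satisfies form an independent set of that size. Hence both
maxima are the same number. -/

open Finset

namespace FGLSS

variable {ι X α : Type*}

theorem exists_forall_eq_of_pairwise_agree {κ : Type*} [Nonempty α] {D : κ → Set X}
    (γ : ∀ k, ∀ x ∈ D k, α)
    (hγ : ∀ k l x (hk : x ∈ D k) (hl : x ∈ D l), γ k x hk = γ l x hl) :
    ∃ σ : X → α, ∀ k x (hx : x ∈ D k), σ x = γ k x hx := by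
  classical
  refine ⟨fun x => if h : ∃ k, x ∈ D k then γ h.choose x h.choose_spec
    else Classical.arbitrary α, fun k x hx => ?_⟩
  have h : ∃ k, x ∈ D k := ⟨k, hx⟩
  simp only [dif_pos h]
  exact hγ _ _ _ _ _

variable (vars : ι → Finset X) (P : ι → (X → α) → Prop)

/-- "`γ` satisfies `P i`" is encoded as: every total extension of `γ` satisfies `P i`. -/
abbrev Vertex : Type _ :=
  Σ i : ι, {γ : ∀ x ∈ vars i, α // ∀ σ : X → α, (∀ x (h : x ∈ vars i), σ x = γ x h) → P i σ}

variable {vars P}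

def Consistent (a b : Vertex vars P) : Prop :=
  ∀ x (h₁ : x ∈ vars a.1) (h₂ : x ∈ vars b.1), a.2.1 x h₁ = b.2.1 x h₂

def IsFGLSSGraph (G : SimpleGraph (Vertex vars P)) : Prop :=
  ∀ a b, G.Adj a b ↔ a ≠ b ∧
    ∃ x, ∃ (h₁ : x ∈ vars a.1) (h₂ : x ∈ vars b.1), a.2.1 x h₁ ≠ b.2.1 x h₂

theorem IsFGLSSGraph.not_adj_iff_consistent {G : SimpleGraph (Vertex vars P)}
    (hG : IsFGLSSGraph G) {a b : Vertex vars P} : ¬G.Adj a b ↔ Consistent a b := by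
  refine ⟨fun h x h₁ h₂ => ?_, fun h hadj => ?_⟩
  · by_contra hne
    rcases eq_or_ne a b with rfl | hab
    · exact hne rfl
    · exact h ((hG a b).2 ⟨hab, x, h₁, h₂, hne⟩)
  · obtain ⟨-, x, h₁, h₂, hne⟩ := (hG a b).1 hadj
    exact hne (h x h₁ h₂)

theorem Consistent.eq_of_fst_eq {a b : Vertex vars P} (h : Consistent a b) (hab : a.1 = b.1) :
    a = b := by
  obtain ⟨i, γ⟩ := a
  obtain ⟨j, δ⟩ := b
  obtain rfl : i = j := hab
  have hγδ : γ = δ := Subtype.ext <| funext fun x => funext fun hx => h x hx hx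
  rw [hγδ]

theorem exists_card_le_card_filter [Fintype ι] [Nonempty α] [∀ i σ, Decidable (P i σ)]
    (s : Finset (Vertex vars P)) (hs : ∀ a ∈ s, ∀ b ∈ s, Consistent a b) :
    ∃ σ : X → α, s.card ≤ (univ.filter fun i => P i σ).card := by
  obtain ⟨σ, hσ⟩ := exists_forall_eq_of_pairwise_agree (D := fun a : s => (vars a.1.1 : Set X))
    (fun a => a.1.2.1) (fun a b => hs a a.2 b b.2)
  exact ⟨σ, card_le_card_of_injOn Sigma.fst
    (fun a ha => mem_filter.2 ⟨mem_univ _, a.2.2 σ (hσ ⟨a, ha⟩)⟩)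
    (fun a ha b hb hab => (hs a ha b hb).eq_of_fst_eq hab)⟩

theorem exists_pairwise_consistent_card_eq [Fintype ι] [∀ i σ, Decidable (P i σ)]
    (hdep : ∀ i (σ σ' : X → α), (∀ x ∈ vars i, σ x = σ' x) → (P i σ ↔ P i σ'))
    (σ : X → α) :
    ∃ s : Finset (Vertex vars P), (∀ a ∈ s, ∀ b ∈ s, Consistent a b) ∧
      s.card = (univ.filter fun i => P i σ).card := by
  let restrict : {i // P i σ} ↪ Vertex vars P :=
    ⟨fun i => ⟨i.1, fun x _ => σ x, fun σ' hσ' => (hdep i σ' σ hσ').2 i.2⟩,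
      fun _ _ h => Subtype.ext (congrArg Sigma.fst h)⟩
  refine ⟨univ.map restrict, ?_, ?_⟩
  · simp only [mem_map]
    rintro _ ⟨i, -, rfl⟩ _ ⟨j, -, rfl⟩ x _ _
    rfl
  · rw [card_map, card_univ, Fintype.card_subtype]

end FGLSS

open FGLSS

theorem fglss_reduction_general (X : Type*) (m : ℕ)
    (vars : Fin m → Finset X) (P : Fin m → (X → Bool) → Prop)
    [∀ i σ, Decidable (P i σ)]
    (hdep : ∀ i (σ σ' : X → Bool), (∀ x ∈ vars i, σ x = σ' x) → (P i σ ↔ P i σ'))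
    (G : SimpleGraph (Σ i : Fin m,
      {γ : ∀ x ∈ vars i, Bool //
        ∀ σ : X → Bool, (∀ x (h : x ∈ vars i), σ x = γ x h) → P i σ}))
    (hG : ∀ a b, G.Adj a b ↔ a ≠ b ∧
      ∃ x, ∃ (h1 : x ∈ vars a.1) (h2 : x ∈ vars b.1), a.2.1 x h1 ≠ b.2.1 x h2) :
    ∃ N : ℕ,
      IsGreatest {n | ∃ s : Finset (Σ i : Fin m,
          {γ : ∀ x ∈ vars i, Bool //
            ∀ σ : X → Bool, (∀ x (h : x ∈ vars i), σ x = γ x h) → P i σ}),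
          (∀ a ∈ s, ∀ b ∈ s, ¬ G.Adj a b) ∧ n = s.card} N ∧
      IsGreatest {n | ∃ σ : X → Bool,
          n = (Finset.univ.filter (fun i => P i σ)).card} N := by
  have hG' : IsFGLSSGraph G := hG
  have hbdd : BddAbove {n | ∃ σ : X → Bool, n = (univ.filter fun i => P i σ).card} :=
    ⟨m, by rintro _ ⟨σ, rfl⟩; exact (card_le_univ _).trans_eq (Fintype.card_fin m)⟩
  obtain ⟨_, ⟨σ₀, rfl⟩, hmax⟩ := hbdd.exists_isGreatest_of_nonempty ⟨_, fun _ => false, rfl⟩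
  refine ⟨_, ⟨?_, ?_⟩, ⟨σ₀, rfl⟩, hmax⟩
  · obtain ⟨s, hs, hcard⟩ := exists_pairwise_consistent_card_eq hdep σ₀
    exact ⟨s, fun a ha b hb => hG'.not_adj_iff_consistent.2 (hs a ha b hb), hcard.symm⟩
  · rintro _ ⟨s, hind, rfl⟩
    obtain ⟨σ, hσ⟩ := exists_card_le_card_filter s
      fun a ha b hb => hG'.not_adj_iff_consistent.1 (hind a ha b hb)
    exact hσ.trans (hmax ⟨σ, rfl⟩)

theorem fglss_reduction (X : Type*) [Fintype X] [DecidableEq X] (m : ℕ)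
    (vars : Fin m → Finset X) (P : Fin m → (X → Bool) → Prop)
    [∀ i σ, Decidable (P i σ)]
    (hdep : ∀ i (σ σ' : X → Bool), (∀ x ∈ vars i, σ x = σ' x) → (P i σ ↔ P i σ'))
    (G : SimpleGraph (Σ i : Fin m,
      {γ : ∀ x ∈ vars i, Bool //
        ∀ σ : X → Bool, (∀ x (h : x ∈ vars i), σ x = γ x h) → P i σ}))
    (hG : ∀ a b, G.Adj a b ↔ a ≠ b ∧
      ∃ x, ∃ (h1 : x ∈ vars a.1) (h2 : x ∈ vars b.1), a.2.1 x h1 ≠ b.2.1 x h2) :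
    ∃ N : ℕ,
      IsGreatest {n | ∃ s : Finset (Σ i : Fin m,
          {γ : ∀ x ∈ vars i, Bool //
            ∀ σ : X → Bool, (∀ x (h : x ∈ vars i), σ x = γ x h) → P i σ}),
          (∀ a ∈ s, ∀ b ∈ s, ¬ G.Adj a b) ∧ n = s.card} N ∧
      IsGreatest {n | ∃ σ : X → Bool,
          n = (Finset.univ.filter (fun i => P i σ)).card} N :=
  fglss_reduction_general X m vars P hdep G hG
end
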